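/- For z² ≠ 1, the operator L(z,r) on W ⊗ ℂ² is invertible with inverse L(z,r)^{-1} = (1−z²)^{-1} · diag(q^{-D} r^{-1}, q^D) · [[1−q^{2D}z², q^{-1}z a†],[qza, 1]]. -/

import Mathlib

noncomputable section

open Finsupp Matrix

/-- The infinite-dimensional space `W = ⊕_{j≥0} ℂ w^j`. -/
abbrev Wsp : Type := ℕ →₀ ℂ

abbrev EndW : Type := Module.End ℂ Wsp

/-- The basis vector `w^j`. -/
def wv (j : ℕ) : Wsp := Finsupp.single j 1

/-- The linear operator on `W` determined by its values on the basis. -/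
def mkOp (g : ℕ → Wsp) : EndW :=
  Finsupp.lsum ℂ fun j => LinearMap.toSpanSingleton ℂ Wsp (g j)

/-- The annihilation operator `a`. -/
def opA : EndW := mkOp fun j => match j with | 0 => 0 | i + 1 => wv i

/-- The creation operator `a†`. -/
def opAdag (q : ℂ) : EndW := mkOp fun j => (1 - q ^ (2 * (j + 1))) • wv (j + 1)

/-- The diagonal operator `f(D)`. -/
def opDiag (f : ℕ → ℂ) : EndW := mkOp fun j => f j • wv j

/-- The L-operator `L(z,r)` on `W ⊗ ℂ²`, written as a 2×2 matrix with entries in `End(W)`. -/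
def Lmat (q z r : ℂ) : Matrix (Fin 2) (Fin 2) EndW :=
  !![1, -(q⁻¹ * z) • opAdag q;
     -(q * z) • opA, opDiag fun j => 1 - q ^ (2 * (j + 1)) * z ^ 2] *
  !![r • opDiag (fun j => q ^ j), 0;
     0, opDiag fun j => (q ^ j)⁻¹]

/-- The claimed inverse of `L(z,r)`. -/
def LmatInv (q z r : ℂ) : Matrix (Fin 2) (Fin 2) EndW :=
  (1 - z ^ 2)⁻¹ •
    (!![r⁻¹ • opDiag (fun j => (q ^ j)⁻¹), 0;
        0, opDiag fun j => q ^ j] *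
     !![opDiag fun j => 1 - q ^ (2 * j) * z ^ 2, (q⁻¹ * z) • opAdag q;
        (q * z) • opA, 1])

/-!
Write `L = A · D` with `D = diag(q^D r, q^{-D})` and the claimed inverse as
`(1 - z²)⁻¹ · D⁻¹ · B`. It suffices that `A B = B A = (1 - z²) · 1`. Entrywise this reduces
to the q-oscillator relations `a a† = 1 - q^{2(D+1)}`, `a† a = 1 - q^{2D}` and the shift rules
`a f(D) = f(D+1) a`, `f(D) a† = a† f(D+1)`, all checked on the basis `w^j`.
-/

section TwoByTwo

variable {R K : Type*} [Ring R] [CommRing K] [Module K R]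

theorem fin_two_neg_mul_eq_smul_one {x y d₀ d₁ : R} {c : K}
    (h₀ : d₀ - x * y = c • 1) (h₁ : d₁ - y * x = c • 1) (hy : y * d₀ = d₁ * y) :
    !![1, -x; -y, d₁] * !![d₀, x; y, 1] = c • (1 : Matrix (Fin 2) (Fin 2) R) := by
  ext i j
  fin_cases i <;> fin_cases j <;>
    simp [Matrix.mul_apply, Fin.sum_univ_two, neg_add_eq_sub, ← sub_eq_add_neg, h₀, h₁, hy]

theorem fin_two_mul_neg_eq_smul_one {x y d₀ d₁ : R} {c : K}
    (h₀ : d₀ - x * y = c • 1) (h₁ : d₁ - y * x = c • 1) (hx : d₀ * x = x * d₁) :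
    !![d₀, x; y, 1] * !![1, -x; -y, d₁] = c • (1 : Matrix (Fin 2) (Fin 2) R) := by
  ext i j
  fin_cases i <;> fin_cases j <;>
    simp [Matrix.mul_apply, Fin.sum_univ_two, neg_add_eq_sub, ← sub_eq_add_neg, h₀, h₁, hx]

theorem fin_two_diag_mul_eq_one {a b a' b' : R} (ha : a * a' = 1) (hb : b * b' = 1) :
    !![a, 0; 0, b] * !![a', 0; 0, b'] = 1 := by
  rw [Matrix.mul_fin_two, Matrix.one_fin_two, ha, hb]
  simp

end TwoByTwo

theorem mul_eq_one_and_of_mul_eq_smul_one {K M : Type*} [Field K] [Ring M] [Module K M]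
    [IsScalarTower K M M] [SMulCommClass K M M] {A B D D' : M} {c : K} (hc : c ≠ 0)
    (hAB : A * B = c • 1) (hBA : B * A = c • 1) (hDD' : D * D' = 1) (hD'D : D' * D = 1) :
    A * D * (c⁻¹ • (D' * B)) = 1 ∧ c⁻¹ • (D' * B) * (A * D) = 1 := by
  constructor
  · rw [mul_smul_comm, mul_assoc, ← mul_assoc D, hDD', one_mul, hAB, smul_smul,
      inv_mul_cancel₀ hc, one_smul]
  · rw [smul_mul_assoc, mul_assoc, ← mul_assoc B, hBA, smul_mul_assoc, one_mul,
      ← mul_smul_comm, smul_smul, inv_mul_cancel₀ hc, one_smul, hD'D]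

theorem mkOp_wv (g : ℕ → Wsp) (j : ℕ) : mkOp g (wv j) = g j := by
  simp [mkOp, wv]

theorem endW_ext {f g : EndW} (h : ∀ j, f (wv j) = g (wv j)) : f = g := by
  refine Finsupp.lhom_ext' fun j => LinearMap.ext_ring ?_
  simpa [wv] using h j

@[simp] theorem opDiag_wv (f : ℕ → ℂ) (j : ℕ) : opDiag f (wv j) = f j • wv j :=
  mkOp_wv _ j

@[simp] theorem opA_wv_zero : opA (wv 0) = 0 := mkOp_wv _ 0

@[simp] theorem opA_wv_succ (j : ℕ) : opA (wv (j + 1)) = wv j := mkOp_wv _ (j + 1)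

@[simp] theorem opAdag_wv (q : ℂ) (j : ℕ) :
    opAdag q (wv j) = (1 - q ^ (2 * (j + 1))) • wv (j + 1) := mkOp_wv _ j

theorem opDiag_mul_opDiag (f g : ℕ → ℂ) : opDiag f * opDiag g = opDiag (f * g) :=
  endW_ext fun j => by simp [smul_smul, mul_comm]

theorem opDiag_const (c : ℂ) : opDiag (fun _ => c) = c • 1 :=
  endW_ext fun j => by simp

theorem opDiag_mul_opDiag_eq_one {f g : ℕ → ℂ} (h : ∀ j, f j * g j = 1) :
    opDiag f * opDiag g = 1 := by
  rw [opDiag_mul_opDiag, show f * g = fun _ => 1 from funext h, opDiag_const, one_smul]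

theorem smul_opDiag_mul_smul_opDiag_eq_one {c c' : ℂ} {f g : ℕ → ℂ} (hc : c * c' = 1)
    (h : ∀ j, f j * g j = 1) : (c • opDiag f) * (c' • opDiag g) = 1 := by
  rw [smul_mul_smul, hc, one_smul, opDiag_mul_opDiag_eq_one h]

theorem opA_mul_opAdag (q : ℂ) : opA * opAdag q = opDiag fun j => 1 - q ^ (2 * (j + 1)) :=
  endW_ext fun j => by simp

theorem opAdag_mul_opA (q : ℂ) : opAdag q * opA = opDiag fun j => 1 - q ^ (2 * j) :=
  endW_ext fun j => by cases j <;> simp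

theorem opA_mul_opDiag (f : ℕ → ℂ) : opA * opDiag f = opDiag (fun j => f (j + 1)) * opA :=
  endW_ext fun j => by cases j <;> simp

theorem opDiag_mul_opAdag (q : ℂ) (f : ℕ → ℂ) :
    opDiag f * opAdag q = opAdag q * opDiag (fun j => f (j + 1)) :=
  endW_ext fun j => by simp [smul_smul, mul_comm]

section LOperator

variable {q : ℂ} (z : ℂ)

theorem opDiag_sub_opAdag_mul_opA (hq : q ≠ 0) :
    (opDiag fun j => 1 - q ^ (2 * j) * z ^ 2) - ((q⁻¹ * z) • opAdag q) * ((q * z) • opA) =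
      (1 - z ^ 2) • 1 := by
  rw [smul_mul_smul, opAdag_mul_opA]
  refine endW_ext fun j => ?_
  simp only [LinearMap.sub_apply, LinearMap.smul_apply, opDiag_wv, Module.End.one_apply, smul_smul,
    ← sub_smul]
  congr 1
  field_simp
  ring

theorem opDiag_sub_opA_mul_opAdag (hq : q ≠ 0) :
    (opDiag fun j => 1 - q ^ (2 * (j + 1)) * z ^ 2) -
        ((q * z) • opA) * ((q⁻¹ * z) • opAdag q) = (1 - z ^ 2) • 1 := by
  rw [smul_mul_smul, opA_mul_opAdag]
  refine endW_ext fun j => ?_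
  simp only [LinearMap.sub_apply, LinearMap.smul_apply, opDiag_wv, Module.End.one_apply, smul_smul,
    ← sub_smul]
  congr 1
  field_simp
  ring

end LOperator

theorem Lmat_inverse_general (q z r : ℂ) (hq0 : q ≠ 0)
    (hr : r ≠ 0) (hz : z ^ 2 ≠ 1) :
    Lmat q z r * LmatInv q z r = 1 ∧ LmatInv q z r * Lmat q z r = 1 := by
  have hA := opA_mul_opDiag fun j => 1 - q ^ (2 * j) * z ^ 2
  have hAdag := opDiag_mul_opAdag q fun j => 1 - q ^ (2 * j) * z ^ 2
  have h₀ := opDiag_sub_opAdag_mul_opA z hq0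
  have h₁ := opDiag_sub_opA_mul_opAdag z hq0
  have hAB := fin_two_neg_mul_eq_smul_one (K := ℂ) (R := EndW) h₀ h₁
    (by rw [smul_mul_assoc, hA, mul_smul_comm])
  have hBA := fin_two_mul_neg_eq_smul_one (K := ℂ) (R := EndW) h₀ h₁
    (by rw [mul_smul_comm, hAdag, smul_mul_assoc])
  have hq : ∀ j, q ^ j ≠ 0 := fun j => pow_ne_zero j hq0
  have hD := fin_two_diag_mul_eq_one (R := EndW)
    (smul_opDiag_mul_smul_opDiag_eq_one (mul_inv_cancel₀ hr) fun j => mul_inv_cancel₀ (hq j))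
    (opDiag_mul_opDiag_eq_one fun j => inv_mul_cancel₀ (hq j))
  have hD' := fin_two_diag_mul_eq_one (R := EndW)
    (smul_opDiag_mul_smul_opDiag_eq_one (inv_mul_cancel₀ hr) fun j => inv_mul_cancel₀ (hq j))
    (opDiag_mul_opDiag_eq_one fun j => mul_inv_cancel₀ (hq j))
  simp only [Lmat, neg_smul (R := ℂ) (M := EndW)]
  exact mul_eq_one_and_of_mul_eq_smul_one (M := Matrix (Fin 2) (Fin 2) EndW)
    (sub_ne_zero.2 hz.symm) hAB hBA hD hD'

/-- for `z² ≠ 1` the operator `L(z,r)` is invertible with the given inverse. -/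
theorem Lmat_inverse (q z r : ℂ) (hq0 : q ≠ 0) (hq1 : q ≠ 1) (hqm1 : q ≠ -1)
    (hr : r ≠ 0) (hz : z ^ 2 ≠ 1) :
    Lmat q z r * LmatInv q z r = 1 ∧ LmatInv q z r * Lmat q z r = 1 :=
  Lmat_inverse_general q z r hq0 hr hz
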